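/- arXiv:1604.02494 — 3 statements merged into one kernel-verified Lean document; each statement's English description precedes it below -/
import Mathlib

section
/- Let g : ℝⁿ → ℝ be differentiable and strongly convex in the sense that ⟨u - v, ∇g(u) - ∇g(v)⟩ ≥ μ‖u - v‖² for all u, v, with μ > 0, let h be proper closed convex, and for c ∈ ℝⁿ let x̄(c) be the unique minimizer of u ↦ g(u) + h(u) + ⟨u, c⟩. Then ‖x̄(c₁) - x̄(c₂)‖ ≤ ‖c₁ - c₂‖/μ for all c₁, c₂. -/
open Filter Topology

lemma stmt6_aux {E : Type*} [NormedAddCommGroup E] [InnerProductSpace ℝ E]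
    [CompleteSpace E]
    (g : E → ℝ) (G : E) (x z c : E) (hg : HasGradientAt g G x)
    (h : E → EReal) (r s : ℝ) (hr : h x = (r : EReal)) (hs : h z = (s : EReal))
    (hconv : ∀ a b : E, ∀ p q : ℝ, 0 ≤ p → 0 ≤ q → p + q = 1 →
      h (p • a + q • b) ≤ (p : EReal) * h a + (q : EReal) * h b)
    (hmin : ∀ u, ((g x + (inner ℝ x c : ℝ) : ℝ) : EReal) + h x ≤
        ((g u + (inner ℝ u c : ℝ) : ℝ) : EReal) + h u) :
    r - s ≤ (inner ℝ G (z - x) : ℝ) + (inner ℝ (z - x) c : ℝ) := by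
  set d := z - x with hd
  set K : ℝ := r - s - (inner ℝ d c : ℝ) with hK
  -- key inequality for t ∈ (0,1)
  have key : ∀ t : ℝ, t ∈ Set.Ioo (0:ℝ) 1 →
      K ≤ (g (x + t • d) - g x) / t := by
    intro t ht
    have ht0 := ht.1
    have ht1 := ht.2.le
    set u := x + t • d with hu
    have hcomb : u = (1 - t) • x + t • z := by
      rw [hu, hd]; module
    have hcv : h u ≤ (((1 - t) * r + t * s : ℝ) : EReal) := by
      rw [hcomb]
      calc h ((1-t) • x + t • z) ≤ ((1-t : ℝ) : EReal) * h x + ((t:ℝ) : EReal) * h z :=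
            hconv x z (1-t) t (by linarith) ht0.le (by ring)
        _ = (((1 - t) * r + t * s : ℝ) : EReal) := by
            rw [hr, hs]; norm_cast
    have hm := hmin u
    rw [hr] at hm
    have hm2 : ((g x + (inner ℝ x c : ℝ) : ℝ) : EReal) + (r : EReal) ≤
        ((g u + (inner ℝ u c : ℝ) : ℝ) : EReal) + (((1 - t) * r + t * s : ℝ) : EReal) :=
      hm.trans (add_le_add_right hcv _)
    have hre : g x + (inner ℝ x c : ℝ) + r ≤
        g u + (inner ℝ u c : ℝ) + ((1 - t) * r + t * s) := by
      have := hm2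
      rw [← EReal.coe_add, ← EReal.coe_add, EReal.coe_le_coe_iff] at this
      exact this
    have hinner : (inner ℝ u c : ℝ) = (inner ℝ x c : ℝ) + t * (inner ℝ d c : ℝ) := by
      rw [hu, inner_add_left, real_inner_smul_left]
    have htK : t * K ≤ g u - g x := by
      rw [hinner] at hre; rw [hK]; nlinarith
    rw [le_div_iff₀ ht0]
    linarith [htK]
  -- derivative of g along the segment
  have hline : HasDerivAt (fun t : ℝ => x + t • d) d 0 := by
    simpa using ((hasDerivAt_id (0:ℝ)).smul_const d).const_add x
  have hD : HasDerivAt (fun t : ℝ => g (x + t • d)) ((inner ℝ G d : ℝ)) 0 := by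
    have hfd : HasFDerivAt g ((InnerProductSpace.toDual ℝ E) G) (x + (0:ℝ) • d) := by
      simpa using hg.hasFDerivAt
    have := hfd.comp_hasDerivAt 0 hline
    simp only [InnerProductSpace.toDual_apply_apply] at this; exact this
  have hslope : Tendsto (slope (fun t : ℝ => g (x + t • d)) 0) (𝓝[>] 0)
      (𝓝 ((inner ℝ G d : ℝ))) := by
    have := hasDerivAt_iff_tendsto_slope.mp hD
    exact this.mono_left (nhdsWithin_mono _ (fun y hy => ne_of_gt hy))
  have hKle : K ≤ (inner ℝ G d : ℝ) := by
    refine ge_of_tendsto hslope ?_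
    filter_upwards [Ioo_mem_nhdsGT_of_mem (Set.mem_Ico.mpr ⟨le_refl 0, zero_lt_one⟩)] with t ht
    have := key t ht
    rw [slope_def_field]
    simpa [zero_smul] using this
  rw [hK] at hKle
  linarith

/-- Lipschitz dependence of the minimizer of `g + h + ⟨·, c⟩` on the linear
tilt `c`, when `g` has a `μ`-strongly monotone gradient and `h` is proper
closed convex. -/
theorem stmt_6 (n : ℕ) (g : EuclideanSpace ℝ (Fin n) → ℝ)
    (g' : EuclideanSpace ℝ (Fin n) → EuclideanSpace ℝ (Fin n))
    (hg' : ∀ x, HasGradientAt g (g' x) x)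
    (μ : ℝ) (hμ : 0 < μ)
    (hstrong : ∀ u v : EuclideanSpace ℝ (Fin n),
      (inner ℝ (u - v) (g' u - g' v) : ℝ) ≥ μ * ‖u - v‖ ^ 2)
    (h : EuclideanSpace ℝ (Fin n) → EReal)
    (hne_bot : ∀ x, h x ≠ ⊥)
    (hproper : ∃ x, h x ≠ ⊤)
    (hclosed : LowerSemicontinuous h)
    (hconv : ∀ x y : EuclideanSpace ℝ (Fin n), ∀ a b : ℝ, 0 ≤ a → 0 ≤ b →
      a + b = 1 → h (a • x + b • y) ≤ (a : EReal) * h x + (b : EReal) * h y)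
    (c₁ c₂ x₁ x₂ : EuclideanSpace ℝ (Fin n))
    (hx₁ : ∀ u, ((g x₁ + (inner ℝ x₁ c₁ : ℝ) : ℝ) : EReal) + h x₁ ≤
        ((g u + (inner ℝ u c₁ : ℝ) : ℝ) : EReal) + h u)
    (hx₂ : ∀ u, ((g x₂ + (inner ℝ x₂ c₂ : ℝ) : ℝ) : EReal) + h x₂ ≤
        ((g u + (inner ℝ u c₂ : ℝ) : ℝ) : EReal) + h u) :
    ‖x₁ - x₂‖ ≤ ‖c₁ - c₂‖ / μ := by
  obtain ⟨x₀, hx₀⟩ := hproper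
  obtain ⟨r₀, hr₀⟩ : ∃ r : ℝ, h x₀ = (r : EReal) :=
    ⟨(h x₀).toReal, (EReal.coe_toReal hx₀ (hne_bot x₀)).symm⟩
  -- finiteness of h at minimizers
  have hfin : ∀ (x : EuclideanSpace ℝ (Fin n)) (c : EuclideanSpace ℝ (Fin n)),
      (∀ u, ((g x + (inner ℝ x c : ℝ) : ℝ) : EReal) + h x ≤
        ((g u + (inner ℝ u c : ℝ) : ℝ) : EReal) + h u) → h x ≠ ⊤ := by
    intro x c hmin htop
    have h1 := hmin x₀
    rw [htop] at h1
    have h2 : (((g x + (inner ℝ x c : ℝ) : ℝ) : EReal) + ⊤) = ⊤ := by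
      simp [EReal.add_top_iff_ne_bot]
    rw [h2, top_le_iff, hr₀, ← EReal.coe_add] at h1
    exact EReal.coe_ne_top _ h1
  have ht₁ := hfin x₁ c₁ hx₁
  have ht₂ := hfin x₂ c₂ hx₂
  obtain ⟨r₁, hr₁⟩ : ∃ r : ℝ, h x₁ = (r : EReal) :=
    ⟨(h x₁).toReal, (EReal.coe_toReal ht₁ (hne_bot x₁)).symm⟩
  obtain ⟨r₂, hr₂⟩ : ∃ r : ℝ, h x₂ = (r : EReal) :=
    ⟨(h x₂).toReal, (EReal.coe_toReal ht₂ (hne_bot x₂)).symm⟩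
  have hcv : ∀ a b : EuclideanSpace ℝ (Fin n), ∀ p q : ℝ, 0 ≤ p → 0 ≤ q → p + q = 1 →
      h (p • a + q • b) ≤ (p : EReal) * h a + (q : EReal) * h b := fun a b p q hp hq hpq =>
    hconv a b p q hp hq hpq
  have A₁ := stmt6_aux g (g' x₁) x₁ x₂ c₁ (hg' x₁) h r₁ r₂ hr₁ hr₂ hcv hx₁
  have A₂ := stmt6_aux g (g' x₂) x₂ x₁ c₂ (hg' x₂) h r₂ r₁ hr₂ hr₁ hcv hx₂
  have hst := hstrong x₁ x₂
  -- expand inner ℝ products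
  have e1 : (inner ℝ (g' x₁) (x₂ - x₁) : ℝ) = -(inner ℝ (x₁ - x₂) (g' x₁) : ℝ) := by
    rw [real_inner_comm, show x₂ - x₁ = -(x₁ - x₂) by abel, inner_neg_left]
  have e2 : (inner ℝ (g' x₂) (x₁ - x₂) : ℝ) = (inner ℝ (x₁ - x₂) (g' x₂) : ℝ) :=
    real_inner_comm _ _
  have e3 : (inner ℝ (x₁ - x₂) (g' x₁ - g' x₂) : ℝ)
      = (inner ℝ (x₁ - x₂) (g' x₁) : ℝ) - (inner ℝ (x₁ - x₂) (g' x₂) : ℝ) := by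
    rw [inner_sub_right]
  have e4 : (inner ℝ (x₂ - x₁) c₁ : ℝ) = -(inner ℝ (x₁ - x₂) c₁ : ℝ) := by
    rw [show x₂ - x₁ = -(x₁ - x₂) by abel, inner_neg_left]
  have e5 : (inner ℝ (x₁ - x₂) (c₂ - c₁) : ℝ)
      = (inner ℝ (x₁ - x₂) c₂ : ℝ) - (inner ℝ (x₁ - x₂) c₁ : ℝ) := by
    rw [inner_sub_right]
  have hmain : μ * ‖x₁ - x₂‖ ^ 2 ≤ (inner ℝ (x₁ - x₂) (c₂ - c₁) : ℝ) := by
    rw [e1, e4] at A₁; rw [e2] at A₂; rw [e3] at hst; rw [e5]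
    linarith
  have hCS : (inner ℝ (x₁ - x₂) (c₂ - c₁) : ℝ) ≤ ‖x₁ - x₂‖ * ‖c₁ - c₂‖ := by
    have := real_inner_le_norm (x₁ - x₂) (c₂ - c₁)
    rwa [norm_sub_rev c₂ c₁] at this
  rcases eq_or_lt_of_le (norm_nonneg (x₁ - x₂)) with h0 | h0
  · rw [← h0]
    positivity
  · rw [le_div_iff₀ hμ]
    nlinarith [sq_nonneg ‖x₁ - x₂‖]
end

section
/- Let M be the block matrix with M_{ij} = A_{i+1}ᵀA_{j+1} for j ≤ i and 0 otherwise, and H its block diagonal. Then for any block vector w, wᵀMw = (1/2)‖Σ_{i=2}^m A_i w_{i-1}‖² + (1/2)wᵀHw; in particular if each A_i (i ≥ 2) has linearly independent columns, then wᵀMw > 0 for w ≠ 0. -/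
lemma half_sum_inner {E : Type*} [NormedAddCommGroup E] [InnerProductSpace ℝ E] {k : ℕ}
    (v : Fin k → E) :
    ∑ i, ∑ j ∈ Finset.Iic i, (inner ℝ (v i) (v j) : ℝ)
      = (1 / 2) * ‖∑ i, v i‖ ^ 2 + (1 / 2) * ∑ i, ‖v i‖ ^ 2 := by
  have hT : ‖∑ i, v i‖ ^ 2 = ∑ i, ∑ j, (inner ℝ (v i) (v j) : ℝ) := by
    rw [← real_inner_self_eq_norm_sq, sum_inner]
    simp [inner_sum]
  have hfilter : ∀ i : Fin k, ∑ j ∈ Finset.Iic i, (inner ℝ (v i) (v j) : ℝ)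
      = ∑ j, if j ≤ i then (inner ℝ (v i) (v j) : ℝ) else 0 := by
    intro i
    rw [← Finset.sum_filter]
    congr 1
    ext j; simp
  have key : 2 * (∑ i, ∑ j ∈ Finset.Iic i, (inner ℝ (v i) (v j) : ℝ))
      = ∑ i, ∑ j, (inner ℝ (v i) (v j) : ℝ) + ∑ i, ‖v i‖ ^ 2 := by
    simp only [hfilter]
    have swap : (∑ i, ∑ j, if j ≤ i then (inner ℝ (v i) (v j) : ℝ) else 0)
        = ∑ i, ∑ j, if i ≤ j then (inner ℝ (v i) (v j) : ℝ) else 0 := by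
      rw [Finset.sum_comm]
      simp [real_inner_comm]
    rw [two_mul]
    nth_rewrite 2 [swap]
    rw [← Finset.sum_add_distrib]
    have : ∀ i, ‖v i‖ ^ 2 = (inner ℝ (v i) (v i) : ℝ) :=
      fun i => (real_inner_self_eq_norm_sq _).symm
    simp only [this, ← Finset.sum_add_distrib]
    refine Finset.sum_congr rfl fun i _ => ?_
    have : ∀ j, ((if j ≤ i then (inner ℝ (v i) (v j) : ℝ) else 0)
        + if i ≤ j then (inner ℝ (v i) (v j) : ℝ) else 0)
        = (inner ℝ (v i) (v j) : ℝ) + if j = i then (inner ℝ (v i) (v j) : ℝ) else 0 := by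
      intro j
      rcases lt_trichotomy j i with h | h | h
      · simp [h.le, h.ne, not_le.mpr h]
      · simp [h]
      · simp [h.le, h.ne', not_le.mpr h]
    simp [this, Finset.sum_add_distrib]
  linarith [key, hT]

/-- `wᵀMw = ½‖∑ A_{i+1} w_i‖² + ½ wᵀHw`, where `M` is the block lower triangular
matrix with blocks `M_{ij} = A_{i+1}ᵀA_{j+1}` for `j ≤ i` and `H` is its block
diagonal; in particular, if each `A_i` has linearly independent columns, then
`wᵀMw > 0` for `w ≠ 0`. -/
theorem stmt_12 (N k : ℕ) (n : Fin k → ℕ)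
    (A : ∀ i : Fin k, Matrix (Fin N) (Fin (n i)) ℝ)
    (w : ∀ i : Fin k, EuclideanSpace ℝ (Fin (n i))) :
    (∑ i, ∑ j ∈ Finset.Iic i,
        (inner ℝ (Matrix.toEuclideanLin (A i) (w i)) (Matrix.toEuclideanLin (A j) (w j)) : ℝ))
      = (1 / 2) * ‖∑ i, Matrix.toEuclideanLin (A i) (w i)‖ ^ 2
        + (1 / 2) * ∑ i, ‖Matrix.toEuclideanLin (A i) (w i)‖ ^ 2 ∧
    ((∀ i, Function.Injective (Matrix.toEuclideanLin (A i))) → w ≠ 0 →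
      0 < ∑ i, ∑ j ∈ Finset.Iic i,
        (inner ℝ (Matrix.toEuclideanLin (A i) (w i)) (Matrix.toEuclideanLin (A j) (w j)) : ℝ)) := by
  set v : Fin k → EuclideanSpace ℝ (Fin N) := fun i => Matrix.toEuclideanLin (A i) (w i) with hv
  refine ⟨half_sum_inner v, fun hinj hw => ?_⟩
  rw [half_sum_inner v]
  obtain ⟨i, hi⟩ : ∃ i, w i ≠ 0 := by
    by_contra h
    push_neg at h
    exact hw (funext h)
  have hvi : v i ≠ 0 := by
    intro h
    apply hi
    have := hinj i (a₁ := w i) (a₂ := 0)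
    simp only [map_zero] at this
    exact this h
  have h1 : 0 < ∑ j, ‖v j‖ ^ 2 :=
    Finset.sum_pos' (fun j _ => by positivity)
      ⟨i, Finset.mem_univ i, pow_pos (norm_pos_iff.mpr hvi) 2⟩
  nlinarith [sq_nonneg ‖∑ j, v j‖]
end

section
/- Let α^l ∈ (0,1] and γ^l > 0 satisfy (1-α^l)γ^l = γ^{l-1} and (α^l)²γ^l = θ^l for each l ≥ 2, with γ¹ = θ¹. If θ^l ≥ Θ > 0 for all l, then √(γ^l) - √(γ^{l-1}) ≥ √(θ^l)/2 for l ≥ 2, and consequently γ^l ≥ (l²/4)Θ for all l ≥ 1. -/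
lemma sqrt_one_sub_le (a : ℝ) (h0 : 0 ≤ a) (h1 : a ≤ 1) :
    Real.sqrt (1 - a) ≤ 1 - a / 2 := by
  have h2 : (1 : ℝ) - a ≤ (1 - a / 2) ^ 2 := by nlinarith
  calc Real.sqrt (1 - a) ≤ Real.sqrt ((1 - a / 2) ^ 2) := Real.sqrt_le_sqrt h2
    _ = 1 - a / 2 := Real.sqrt_sq (by linarith)

/-- If `(1-α^l)γ^l = γ^{l-1}`, `(α^l)²γ^l = θ^l ≥ Θ > 0` and `γ¹ = θ¹`, then
`√γ^l - √γ^{l-1} ≥ √θ^l/2` for `l ≥ 2`, and `γ^l ≥ (l²/4)Θ` for all `l ≥ 1`. -/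
theorem stmt_18 (α γ θ : ℕ → ℝ) (Θ : ℝ) (hΘ : 0 < Θ)
    (hα : ∀ l, 2 ≤ l → 0 < α l ∧ α l < 1)
    (hrec : ∀ l, 2 ≤ l → (1 - α l) * γ l = γ (l - 1))
    (hθγ : ∀ l, 2 ≤ l → (α l) ^ 2 * γ l = θ l)
    (hγ1 : γ 1 = θ 1)
    (hθΘ : ∀ l, 1 ≤ l → θ l ≥ Θ) :
    (∀ l, 2 ≤ l →
        Real.sqrt (γ l) - Real.sqrt (γ (l - 1)) ≥ Real.sqrt (θ l) / 2) ∧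
      ∀ l, 1 ≤ l → γ l ≥ ((l : ℝ) ^ 2 / 4) * Θ := by
  -- positivity of γ
  have hγpos : ∀ l, 1 ≤ l → 0 < γ l := by
    intro l hl
    induction l with
    | zero => omega
    | succ n ih =>
      rcases Nat.lt_or_ge n 1 with h | h
      · interval_cases n
        · rw [hγ1]; exact lt_of_lt_of_le hΘ (hθΘ 1 le_rfl)
      · have h2 : 2 ≤ n + 1 := by omega
        have hrec' := hrec (n + 1) h2
        have hα' := hα (n + 1) h2
        have hprev : 0 < γ n := ih h
        simp only [Nat.add_sub_cancel] at hrec'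
        nlinarith [hα'.1, hα'.2]
  have key : ∀ l, 2 ≤ l →
      Real.sqrt (γ l) - Real.sqrt (γ (l - 1)) ≥ Real.sqrt (θ l) / 2 := by
    intro l hl
    obtain ⟨hα0, hα1⟩ := hα l hl
    have hγl : 0 < γ l := hγpos l (by omega)
    have hrec' := hrec l hl
    have hθ' := hθγ l hl
    have h1 : Real.sqrt (γ (l - 1)) = Real.sqrt (1 - α l) * Real.sqrt (γ l) := by
      rw [← Real.sqrt_mul (by linarith) (γ l), hrec']
    have h2 : Real.sqrt (θ l) = α l * Real.sqrt (γ l) := by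
      rw [← hθ', Real.sqrt_mul (by positivity) (γ l), Real.sqrt_sq hα0.le]
    rw [h1, h2]
    have h3 : Real.sqrt (1 - α l) ≤ 1 - α l / 2 :=
      sqrt_one_sub_le (α l) hα0.le hα1.le
    have h4 : 0 ≤ Real.sqrt (γ l) := Real.sqrt_nonneg _
    nlinarith
  refine ⟨key, ?_⟩
  -- show √γ l ≥ l √Θ / 2
  have hsqrt : ∀ l, 1 ≤ l → Real.sqrt (γ l) ≥ (l : ℝ) * Real.sqrt Θ / 2 := by
    intro l hl
    induction l with
    | zero => omega
    | succ n ih =>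
      rcases Nat.lt_or_ge n 1 with h | h
      · interval_cases n
        · have : Real.sqrt Θ ≤ Real.sqrt (γ 1) := by
            apply Real.sqrt_le_sqrt
            rw [hγ1]; exact hθΘ 1 le_rfl
          have h0 : 0 ≤ Real.sqrt Θ := Real.sqrt_nonneg _
          push_cast; linarith
      · have h2 : 2 ≤ n + 1 := by omega
        have hk := key (n + 1) h2
        simp only [Nat.add_sub_cancel] at hk
        have hθl : Real.sqrt Θ ≤ Real.sqrt (θ (n + 1)) :=
          Real.sqrt_le_sqrt (hθΘ (n + 1) (by omega))
        have ihn := ih h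
        push_cast
        push_cast at ihn
        linarith
  intro l hl
  have h1 := hsqrt l hl
  have h2 : 0 ≤ (l : ℝ) * Real.sqrt Θ / 2 := by positivity
  have h3 : ((l : ℝ) * Real.sqrt Θ / 2) ^ 2 ≤ Real.sqrt (γ l) ^ 2 := by
    exact pow_le_pow_left₀ h2 h1 2
  rw [Real.sq_sqrt (hγpos l hl).le] at h3
  have h4 : Real.sqrt Θ ^ 2 = Θ := Real.sq_sqrt hΘ.le
  nlinarith
end
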